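/- The map d̃_LS(d) := D-collapse of d^t on type-C partitions of size 2n is order reversing: if d and d' are type-C partitions of size 2n with d ≼ d' in the dominance order, then d̃_LS(d') ≼ d̃_LS(d). -/

import Mathlib

/-!
Partitions (Young diagrams) are represented as antitone, eventually-zero
functions `f : ℕ → ℕ`, where `f i` is the length of the `(i+1)`-st row.
-/

/-- `f : ℕ → ℕ` represents a partition (Young diagram). -/
def IsPartition (f : ℕ → ℕ) : Prop :=
  Antitone f ∧ ∃ N, ∀ i, N ≤ i → f i = 0

/-- The size of a partition: the sum of its parts. -/
noncomputable def size (f : ℕ → ℕ) : ℕ := ∑' i, f i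

/-- The sum of the `k` largest parts of a partition. -/
def psum (f : ℕ → ℕ) (k : ℕ) : ℕ := ∑ i ∈ Finset.range k, f i

/-- The multiplicity with which `p` occurs as a part. -/
noncomputable def mult (f : ℕ → ℕ) (p : ℕ) : ℕ := {i | f i = p}.ncard

/-- The transpose (conjugate) partition: `transpose f i` is the length of the
`(i+1)`-st column of `f`. -/
noncomputable def transpose (f : ℕ → ℕ) : ℕ → ℕ := fun i => {j | i < f j}.ncard

/-- The number of parts of a partition (the length of its first column). -/
noncomputable def numParts (f : ℕ → ℕ) : ℕ := {j | 0 < f j}.ncard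

/-- Type B: odd size, and every (positive) even part occurs with even multiplicity. -/
def IsTypeB (f : ℕ → ℕ) : Prop :=
  IsPartition f ∧ Odd (size f) ∧ ∀ p, 0 < p → Even p → Even (mult f p)

/-- Type C: even size, and every odd part occurs with even multiplicity. -/
def IsTypeC (f : ℕ → ℕ) : Prop :=
  IsPartition f ∧ Even (size f) ∧ ∀ p, Odd p → Even (mult f p)

/-- Type D: even size, and every (positive) even part occurs with even multiplicity. -/
def IsTypeD (f : ℕ → ℕ) : Prop :=
  IsPartition f ∧ Even (size f) ∧ ∀ p, 0 < p → Even p → Even (mult f p)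

/-- Dominance order `f ≼ g` between partitions of the same size. -/
def Dom (f g : ℕ → ℕ) : Prop :=
  size f = size g ∧ ∀ k, psum f k ≤ psum g k

/-- `c` is the X-collapse of `d`, where predicate `T` expresses "type X": `c` is
the greatest type-X partition of the same size dominated by `d`. -/
def IsCollapse (T : (ℕ → ℕ) → Prop) (d c : ℕ → ℕ) : Prop :=
  T c ∧ Dom c d ∧ ∀ e, T e → Dom e d → Dom e c

open Classical in
/-- The X-collapse of `d` (junk value if it does not exist). -/
noncomputable def collapse (T : (ℕ → ℕ) → Prop) (d : ℕ → ℕ) : ℕ → ℕ :=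
  if h : ∃ c, IsCollapse T d c then h.choose else fun _ => 0

/-- The B-collapse. -/
noncomputable def collapseB : (ℕ → ℕ) → ℕ → ℕ := collapse IsTypeB

/-- The C-collapse. -/
noncomputable def collapseC : (ℕ → ℕ) → ℕ → ℕ := collapse IsTypeC

/-- The D-collapse. -/
noncomputable def collapseD : (ℕ → ℕ) → ℕ → ℕ := collapse IsTypeD

/-- `d⁺`: add one box to the first row. -/
def boxPlus (f : ℕ → ℕ) : ℕ → ℕ := fun i => if i = 0 then f 0 + 1 else f i

/-- `d⁻`: remove one box from the last row (for nonempty `d`). -/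
noncomputable def boxMinus (f : ℕ → ℕ) : ℕ → ℕ :=
  fun i => if i = numParts f - 1 then f i - 1 else f i

/-- `∇(d)`: remove the first column (every part decreased by 1). -/
def delCol (f : ℕ → ℕ) : ℕ → ℕ := fun i => f i - 1

/-- `∇̌(d)`: remove the first row (delete one largest part). -/
def delRow (f : ℕ → ℕ) : ℕ → ℕ := fun i => f (i + 1)

/-- The metaplectic Lusztig–Spaltenstein map: the D-collapse of the transpose. -/
noncomputable def mLS (d : ℕ → ℕ) : ℕ → ℕ := collapseD (transpose d)

/-- The map `d̃_SP`: the C-collapse of `(e⁺)⁻`. -/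
noncomputable def mSP (e : ℕ → ℕ) : ℕ → ℕ := collapseC (boxMinus (boxPlus e))

/-- The metaplectic Barbasch–Vogan duality. -/
noncomputable def mBV (d : ℕ → ℕ) : ℕ → ℕ := mSP (mLS d)

/-!
Transposition reverses dominance, and a partition `f` is of type D exactly when the partial
sums `q₀ + ⋯ + q₂ₜ` of `q = fᵗ` are all even (a part `2s+2` of `f` occurs `q₂ₛ₊₁ - q₂ₛ₊₂`
times). Hence the D-collapse of `dᵗ` is the transpose of the least partition dominating `d`
with these parities. That least partition exists: the pointwise minimum of the partial-sum
functions of all such partitions is still concave, so it is the partial-sum function of a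
partition, and every condition involved is a condition on single values of it. Order reversal
then follows, since a collapse is monotone in its argument.
-/

lemma psum_succ (f : ℕ → ℕ) (k : ℕ) : psum f (k + 1) = psum f k + f k :=
  Finset.sum_range_succ f k

lemma psum_mono (f : ℕ → ℕ) : Monotone (psum f) := fun _ _ h =>
  Finset.sum_le_sum_of_subset (Finset.range_subset_range.mpr h)

lemma size_eq_psum {f : ℕ → ℕ} {N : ℕ} (hN : ∀ i, N ≤ i → f i = 0) : size f = psum f N :=
  tsum_eq_sum fun i hi => hN i (by simpa using hi)

lemma Dom.trans {f g h : ℕ → ℕ} (hfg : Dom f g) (hgh : Dom g h) : Dom f h :=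
  ⟨hfg.1.trans hgh.1, fun k => (hfg.2 k).trans (hgh.2 k)⟩

section Partition

variable {f g : ℕ → ℕ}

lemma IsPartition.psum_le_size (hf : IsPartition f) (k : ℕ) : psum f k ≤ size f := by
  obtain ⟨-, N, hN⟩ := hf
  rw [size_eq_psum fun i hi => hN i (le_of_max_le_left hi)]
  exact psum_mono f (le_max_right N k)

lemma IsPartition.apply_eq_zero_of_size_le (hf : IsPartition f) {i : ℕ} (hi : size f ≤ i) :
    f i = 0 := by
  by_contra h
  have hpos : ∀ j ∈ Finset.range (i + 1), 1 ≤ f j := fun j hj =>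
    (Nat.one_le_iff_ne_zero.mpr h).trans (hf.1 (Finset.mem_range_succ_iff.mp hj))
  have := (Finset.card_nsmul_le_sum _ _ _ hpos).trans (hf.psum_le_size (i + 1))
  simp only [Finset.card_range, smul_eq_mul, mul_one] at this
  omega

lemma IsPartition.psum_eq_size (hf : IsPartition f) {k : ℕ} (hk : size f ≤ k) :
    psum f k = size f :=
  (size_eq_psum fun _ hi => hf.apply_eq_zero_of_size_le (hk.trans hi)).symm

lemma IsPartition.setOf_lt_eq_Iio (hf : IsPartition f) (j : ℕ) :
    {i | j < f i} = Set.Iio (sInf {i | f i ≤ j}) := by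
  have hne : {i | f i ≤ j}.Nonempty := by
    obtain ⟨-, N, hN⟩ := hf
    exact ⟨N, by simp [hN N le_rfl]⟩
  ext i
  simp only [Set.mem_ofPred_eq, Set.mem_Iio]
  constructor
  · intro h
    by_contra! h'
    have hmem : f (sInf {i | f i ≤ j}) ≤ j := Nat.sInf_mem hne
    have := hf.1 h'
    omega
  · intro h
    simpa using Nat.notMem_of_lt_sInf h

lemma IsPartition.lt_transpose_iff (hf : IsPartition f) {i j : ℕ} :
    i < transpose f j ↔ j < f i := by
  have h := hf.setOf_lt_eq_Iio j
  rw [transpose, h, ← Finset.coe_range, Set.ncard_coe_finset, Finset.card_range]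
  exact (Set.ext_iff.mp h i).symm

lemma IsPartition.transpose_apply_eq_zero (hf : IsPartition f) {j : ℕ} (hj : f 0 ≤ j) :
    transpose f j = 0 := by
  by_contra h
  have := hf.lt_transpose_iff.mp (Nat.pos_of_ne_zero h)
  omega

lemma isPartition_transpose (hf : IsPartition f) : IsPartition (transpose f) :=
  ⟨fun _ _ hjj' => le_of_forall_lt fun _ hi =>
      hf.lt_transpose_iff.mpr (hjj'.trans_lt (hf.lt_transpose_iff.mp hi)),
    f 0, fun _ => hf.transpose_apply_eq_zero⟩

lemma IsPartition.transpose_transpose (hf : IsPartition f) : transpose (transpose f) = f :=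
  funext fun _ => eq_of_forall_lt_iff fun _ => by
    rw [(isPartition_transpose hf).lt_transpose_iff, hf.lt_transpose_iff]

lemma transpose_apply_eq_card {N : ℕ} (hN : ∀ i, N ≤ i → f i = 0) (j : ℕ) :
    transpose f j = ((Finset.range N).filter (j < f ·)).card := by
  rw [transpose, ← Set.ncard_coe_finset]
  congr 1
  ext i
  simp only [Set.mem_ofPred_eq, Finset.coe_filter, Finset.mem_range]
  exact ⟨fun h => ⟨by by_contra! hi; simp [hN i hi] at h, h⟩, And.right⟩

lemma psum_transpose {N : ℕ} (hN : ∀ i, N ≤ i → f i = 0) (k : ℕ) :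
    psum (transpose f) k = ∑ i ∈ Finset.range N, min (f i) k := by
  calc psum (transpose f) k
      = ∑ j ∈ Finset.range k, ∑ i ∈ Finset.range N, if j < f i then 1 else 0 := by
        simp only [psum, transpose_apply_eq_card hN, Finset.card_filter]
    _ = ∑ i ∈ Finset.range N, ((Finset.range k).filter (· < f i)).card := by
        rw [Finset.sum_comm]
        simp only [Finset.card_filter]
    _ = ∑ i ∈ Finset.range N, min (f i) k := by
        congr! 1 with i
        rw [show (Finset.range k).filter (· < f i) = Finset.range (min (f i) k) by
          ext; simp [and_comm]]
        exact Finset.card_range _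

lemma IsPartition.psum_transpose_add_psum_le (hf : IsPartition f) (k m : ℕ) :
    psum (transpose f) k + psum f m ≤ k * m + size f := by
  set N := max (size f) m
  have hN : ∀ i, N ≤ i → f i = 0 := fun i hi =>
    hf.apply_eq_zero_of_size_le (le_of_max_le_left hi)
  have hmN : m ≤ N := le_max_right _ _
  have hhead : ∑ i ∈ Finset.range m, min (f i) k ≤ k * m := by
    simpa [mul_comm] using
      Finset.sum_le_card_nsmul (Finset.range m) _ k fun i _ => min_le_right (f i) k
  have htail : ∑ i ∈ Finset.Ico m N, min (f i) k ≤ ∑ i ∈ Finset.Ico m N, f i :=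
    Finset.sum_le_sum fun i _ => min_le_left _ _
  rw [psum_transpose hN, size_eq_psum hN, psum, psum, ← Finset.sum_range_add_sum_Ico _ hmN,
    ← Finset.sum_range_add_sum_Ico f hmN]
  omega

lemma IsPartition.psum_transpose_add_psum_transpose (hf : IsPartition f) (k : ℕ) :
    psum (transpose f) k + psum f (transpose f k) = k * transpose f k + size f := by
  set m := transpose f k
  set N := max (size f) m
  have hN : ∀ i, N ≤ i → f i = 0 := fun i hi =>
    hf.apply_eq_zero_of_size_le (le_of_max_le_left hi)
  have hmN : m ≤ N := le_max_right _ _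
  have hhead : ∑ i ∈ Finset.range m, min (f i) k = k * m := by
    rw [Finset.sum_congr rfl fun i hi =>
      min_eq_right (hf.lt_transpose_iff.mp (Finset.mem_range.mp hi)).le]
    simp [m, mul_comm]
  have htail : ∑ i ∈ Finset.Ico m N, min (f i) k = ∑ i ∈ Finset.Ico m N, f i :=
    Finset.sum_congr rfl fun i hi => min_eq_left <| not_lt.mp fun h =>
      (Finset.mem_Ico.mp hi).1.not_gt (hf.lt_transpose_iff.mpr h)
  rw [psum_transpose hN, size_eq_psum hN, psum, psum, ← Finset.sum_range_add_sum_Ico _ hmN,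
    ← Finset.sum_range_add_sum_Ico f hmN]
  omega

lemma IsPartition.size_transpose (hf : IsPartition f) : size (transpose f) = size f := by
  have h := hf.psum_transpose_add_psum_transpose (f 0)
  rw [hf.transpose_apply_eq_zero le_rfl] at h
  rw [size_eq_psum fun _ hj => hf.transpose_apply_eq_zero hj]
  simpa [psum] using h

lemma dom_transpose (hfg : Dom f g) (hf : IsPartition f) (hg : IsPartition g) :
    Dom (transpose g) (transpose f) := by
  refine ⟨by rw [hg.size_transpose, hf.size_transpose, hfg.1], fun k => ?_⟩
  have hle := hg.psum_transpose_add_psum_le k (transpose f k)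
  have heq := hf.psum_transpose_add_psum_transpose k
  have hdom := hfg.2 (transpose f k)
  have hsize := hfg.1
  omega

end Partition

section TypeD

variable {f : ℕ → ℕ}

lemma IsPartition.mult_eq_transpose_sub (hf : IsPartition f) {p : ℕ} (hp : 0 < p) :
    mult f p = transpose f (p - 1) - transpose f p := by
  have hset : {i | f i = p} = Set.Ico (transpose f p) (transpose f (p - 1)) := by
    ext i
    have h₁ := hf.lt_transpose_iff (i := i) (j := p - 1)
    have h₂ := hf.lt_transpose_iff (i := i) (j := p)
    simp only [Set.mem_ofPred_eq, Set.mem_Ico]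
    omega
  rw [mult, hset, ← Finset.coe_Ico, Set.ncard_coe_finset, Nat.card_Ico]

lemma IsPartition.even_mult_iff (hf : IsPartition f) :
    (∀ p, 0 < p → Even p → Even (mult f p)) ↔
      ∀ s, Even (transpose f (2 * s + 1) + transpose f (2 * s + 2)) := by
  have key : ∀ s, Even (mult f (2 * s + 2)) ↔
      Even (transpose f (2 * s + 1) + transpose f (2 * s + 2)) := fun s => by
    rw [hf.mult_eq_transpose_sub (by omega), Nat.even_add,
      Nat.even_sub ((isPartition_transpose hf).1 (by omega))]
    rfl
  constructor
  · exact fun h s => (key s).mp (h _ (by omega) ⟨s + 1, by ring⟩)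
  · rintro h p hp ⟨r, rfl⟩
    obtain ⟨s, rfl⟩ : ∃ s, r = s + 1 := ⟨r - 1, by omega⟩
    rw [show s + 1 + (s + 1) = 2 * s + 2 by ring]
    exact (key s).mpr (h s)

lemma psum_two_mul_succ_add_one (a : ℕ → ℕ) (t : ℕ) :
    psum a (2 * (t + 1) + 1) = psum a (2 * t + 1) + (a (2 * t + 1) + a (2 * t + 2)) := by
  rw [show 2 * (t + 1) + 1 = 2 * t + 1 + 1 + 1 by ring, psum_succ, psum_succ]
  ring

lemma IsPartition.isTypeD_iff (hf : IsPartition f) :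
    IsTypeD f ↔ ∀ t, Even (psum (transpose f) (2 * t + 1)) := by
  set q := transpose f
  have hsize : size f = psum q (2 * size f + 1) := by
    rw [(isPartition_transpose hf).psum_eq_size (by rw [hf.size_transpose]; omega),
      hf.size_transpose]
  have hstep : ∀ t, Even (psum q (2 * (t + 1) + 1)) ↔
      (Even (psum q (2 * t + 1)) ↔ Even (q (2 * t + 1) + q (2 * t + 2))) := fun t => by
    rw [psum_two_mul_succ_add_one, Nat.even_add]
  rw [IsTypeD, hf.even_mult_iff]
  constructor
  · rintro ⟨-, hsz, hpairs⟩
    have hpar : ∀ t, Even (psum q (2 * t + 1)) ↔ Even (q 0) := fun t => by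
      induction t with
      | zero => simp [psum]
      | succ t ih => rw [hstep, ih, iff_true_right (hpairs t)]
    exact fun t => (hpar t).mpr ((hpar (size f)).mp (hsize ▸ hsz))
  · exact fun h => ⟨hf, hsize ▸ h _, fun s => ((hstep s).mp (h (s + 1))).mp (h s)⟩

end TypeD

lemma exists_isPartition_psum_eq {t : ℕ → ℕ} (h0 : t 0 = 0) (hmono : Monotone t)
    (hconcave : ∀ k, t (k + 2) + t k ≤ 2 * t (k + 1)) {N : ℕ} (hN : ∀ k, N ≤ k → t k = t N) :
    ∃ r, IsPartition r ∧ size r = t N ∧ psum r = t := by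
  obtain ⟨r, hr⟩ : ∃ r : ℕ → ℕ, ∀ k, r k = t (k + 1) - t k := ⟨_, fun _ => rfl⟩
  have hpsum : psum r = t := by
    funext k
    induction k with
    | zero => simp [psum, h0]
    | succ k ih =>
      have := hmono (Nat.le_add_right k 1)
      rw [psum_succ, ih, hr]
      omega
  have hzero : ∀ i, N ≤ i → r i = 0 := fun i hi => by
    have := hN i hi
    have := hN (i + 1) (by omega)
    rw [hr]
    omega
  refine ⟨r, ⟨antitone_nat_of_succ_le fun k => ?_, N, hzero⟩,
    by rw [size_eq_psum hzero, hpsum], hpsum⟩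
  have := hconcave k
  have := hmono (Nat.le_add_right k 1)
  have : t (k + 1) ≤ t (k + 2) := hmono (Nat.le_add_right (k + 1) 1)
  rw [hr, hr]
  show t (k + 2) - t (k + 1) ≤ t (k + 1) - t k
  omega

-- A pointwise minimum of concave functions is concave.
lemma exists_isLeast_psum {S : Set (ℕ → ℕ)} (hS : S.Nonempty) (hpart : ∀ q ∈ S, IsPartition q)
    {m : ℕ} (hsize : ∀ q ∈ S, size q = m) :
    ∃ r, IsPartition r ∧ size r = m ∧ ∀ k, IsLeast ((psum · k) '' S) (psum r k) := by
  set t : ℕ → ℕ := fun k => sInf ((psum · k) '' S)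
  have hattain : ∀ k, ∃ q ∈ S, psum q k = t k := fun k => Nat.sInf_mem (hS.image _)
  have hlower : ∀ k, ∀ q ∈ S, t k ≤ psum q k := fun k q hq => Nat.sInf_le ⟨q, hq, rfl⟩
  have h0 : t 0 = 0 := by
    obtain ⟨q, -, hq⟩ := hattain 0
    simpa [psum] using hq.symm
  have hmono : Monotone t := monotone_nat_of_le_succ fun k => by
    obtain ⟨q, hq, hqk⟩ := hattain (k + 1)
    exact (hlower k q hq).trans (hqk ▸ psum_mono q k.le_succ)
  have hconcave : ∀ k, t (k + 2) + t k ≤ 2 * t (k + 1) := fun k => by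
    obtain ⟨q, hq, hqk⟩ := hattain (k + 1)
    have h₁ := hlower (k + 2) q hq
    have h₂ := hlower k q hq
    have h₃ : psum q (k + 2) = psum q (k + 1) + q (k + 1) := psum_succ q (k + 1)
    have h₄ := psum_succ q k
    have h₅ : q (k + 1) ≤ q k := (hpart q hq).1 k.le_succ
    omega
  have htop : ∀ k, m ≤ k → t k = m := fun k hk => by
    obtain ⟨q, hq, hqk⟩ := hattain k
    rw [← hqk, (hpart q hq).psum_eq_size (hsize q hq ▸ hk), hsize q hq]
  obtain ⟨r, hr, hrsize, hrpsum⟩ :=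
    exists_isPartition_psum_eq h0 hmono hconcave fun k hk =>
      (htop k hk).trans (htop m le_rfl).symm
  refine ⟨r, hr, hrsize.trans (htop m le_rfl), fun k => ?_⟩
  rw [hrpsum]
  obtain ⟨q, hq, hqk⟩ := hattain k
  exact ⟨⟨q, hq, hqk⟩, by rintro _ ⟨q, hq, rfl⟩; exact hlower k q hq⟩

def row (m : ℕ) : ℕ → ℕ := fun i => if i = 0 then m else 0

lemma psum_row_succ (m k : ℕ) : psum (row m) (k + 1) = m := by
  simp [psum, row, Finset.sum_ite_eq']

lemma isPartition_row (m : ℕ) : IsPartition (row m) :=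
  ⟨fun i j hij => by unfold row; split_ifs <;> omega, 1, fun i hi => if_neg (by omega)⟩

lemma IsPartition.dom_row {d : ℕ → ℕ} (hd : IsPartition d) : Dom d (row (size d)) := by
  have hsize : size (row (size d)) = size d := by
    rw [size_eq_psum (f := row _) (N := 1) fun i hi => if_neg (by omega), psum_row_succ]
  refine ⟨hsize.symm, ?_⟩
  rintro (_ | k)
  · exact le_rfl
  · exact psum_row_succ _ k ▸ hd.psum_le_size _

lemma exists_least_dom_even_psum {d : ℕ → ℕ} (hd : IsPartition d) (heven : Even (size d)) :
    ∃ r, IsPartition r ∧ Dom d r ∧ (∀ t, Even (psum r (2 * t + 1))) ∧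
      ∀ q, IsPartition q → Dom d q → (∀ t, Even (psum q (2 * t + 1))) → Dom r q := by
  set S := {q | IsPartition q ∧ Dom d q ∧ ∀ t, Even (psum q (2 * t + 1))}
  have hrow : row (size d) ∈ S :=
    ⟨isPartition_row _, hd.dom_row, fun t => (psum_row_succ _ (2 * t)).symm ▸ heven⟩
  obtain ⟨r, hr, hrsize, hleast⟩ :=
    exists_isLeast_psum ⟨_, hrow⟩ (fun q hq => hq.1) fun q hq => hq.2.1.1.symm
  refine ⟨r, hr, ⟨hrsize.symm, fun k => ?_⟩, fun t => ?_,
    fun q hq hdq hqeven =>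
      ⟨hrsize.trans hdq.1, fun k => (hleast k).2 ⟨q, ⟨hq, hdq, hqeven⟩, rfl⟩⟩⟩
  · obtain ⟨q, hq, hqk⟩ := (hleast k).1
    exact hqk ▸ hq.2.1.2 k
  · obtain ⟨q, hq, hqk⟩ := (hleast (2 * t + 1)).1
    exact hqk ▸ hq.2.2 t

lemma exists_isCollapse_typeD_transpose {d : ℕ → ℕ} (hd : IsPartition d)
    (heven : Even (size d)) : ∃ c, IsCollapse IsTypeD (transpose d) c := by
  obtain ⟨r, hr, hdr, hreven, hleast⟩ := exists_least_dom_even_psum hd heven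
  refine ⟨transpose r, ?_, dom_transpose hdr hd hr, fun e he hed => ?_⟩
  · rwa [(isPartition_transpose hr).isTypeD_iff, hr.transpose_transpose]
  · have hde : Dom d (transpose e) := by
      simpa [hd.transpose_transpose] using dom_transpose hed he.1 (isPartition_transpose hd)
    have := dom_transpose (hleast _ (isPartition_transpose he.1) hde (he.1.isTypeD_iff.mp he))
      hr (isPartition_transpose he.1)
    rwa [he.1.transpose_transpose] at this

lemma isCollapse_collapse {T : (ℕ → ℕ) → Prop} {d : ℕ → ℕ} (h : ∃ c, IsCollapse T d c) :
    IsCollapse T d (collapse T d) := by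
  rw [collapse, dif_pos h]
  exact h.choose_spec

lemma collapse_mono {T : (ℕ → ℕ) → Prop} {a b : ℕ → ℕ} (ha : ∃ c, IsCollapse T a c)
    (hb : ∃ c, IsCollapse T b c) (hab : Dom a b) : Dom (collapse T a) (collapse T b) := by
  obtain ⟨hTa, hdoma, -⟩ := isCollapse_collapse ha
  exact (isCollapse_collapse hb).2.2 _ hTa (hdoma.trans hab)

theorem stmt_2_general (d d' : ℕ → ℕ) (hd : IsTypeC d) (hd' : IsTypeC d')
    (hdom : Dom d d') : Dom (mLS d') (mLS d) :=
  collapse_mono (exists_isCollapse_typeD_transpose hd'.1 hd'.2.1)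
    (exists_isCollapse_typeD_transpose hd.1 hd.2.1) (dom_transpose hdom hd.1 hd'.1)

/-- the map `d̃_LS(d) := D-collapse of dᵗ` on type-C partitions of
size `2n` is order reversing for the dominance order. -/
theorem stmt_2 (n : ℕ) (d d' : ℕ → ℕ) (hd : IsTypeC d) (hd' : IsTypeC d')
    (hsize : size d = 2 * n) (hsize' : size d' = 2 * n) (hdom : Dom d d') :
    Dom (mLS d') (mLS d) :=
  stmt_2_general d d' hd hd' hdom
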